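/- arXiv:1101.5721 — 5 statements merged into one kernel-verified Lean document; each statement's English description precedes it below -/
import Mathlib

section
/- Let q > 2 and ρ = 1 - (q-2)/(2q³). Suppose (d_t), (s_t) are positive sequences satisfying d_{t+1}/s_{t+1} = (d_t/s_t)(1 - ((q-1)/(2q³))e^{-(1/q)(d_t/s_t)}) for all t ≥ t₁, with d_{t₁}/s_{t₁} < 1/q² and d_t/s_t < 1 for all t ≥ t₁. Then d_{t₁+t}/s_{t₁+t} < (1/q²)ρ^t for all t ≥ 0. -/
/-!
Write `x_t = d_t / s_t` and `c = (q - 1) / (2 q³)`. While `0 ≤ x_t ≤ 1` we have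
`e^{-x_t / q} ≥ e^{-1/q} ≥ 1 - 1/q`, so the factor `1 - c e^{-x_t/q}` is at most
`1 - (q - 1)² / (2 q⁴) ≤ 1 - (q - 2) / (2 q³) = ρ`, using `(q - 1)² ≥ q (q - 2)`.
Hence `x_{t+1} ≤ ρ x_t`, and the bound follows by induction from `x_{t₁} < 1 / q²`.
-/

open Real

lemma lt_mul_pow_of_le_mul {u : ℕ → ℝ} {B ρ : ℝ} (hρ : 0 < ρ) (h₀ : u 0 < B)
    (hstep : ∀ t, u (t + 1) ≤ ρ * u t) (t : ℕ) : u t < B * ρ ^ t := by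
  induction t with
  | zero => simpa using h₀
  | succ t ih =>
    calc u (t + 1) ≤ ρ * u t := hstep t
      _ < ρ * (B * ρ ^ t) := mul_lt_mul_of_pos_left ih hρ
      _ = B * ρ ^ (t + 1) := by ring

lemma one_sub_le_exp_neg_mul {a x : ℝ} (ha : 0 ≤ a) (hx : x ≤ 1) :
    1 - a ≤ exp (-a * x) :=
  calc 1 - a ≤ exp (-a) := by linarith [add_one_le_exp (-a)]
    _ ≤ exp (-a * x) := exp_le_exp.mpr (by nlinarith)

lemma one_sub_div_two_mul_cube_pos {q : ℝ} (hq : 0 < q) : 0 < 1 - (q - 2) / (2 * q ^ 3) := by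
  rw [sub_pos, div_lt_one (by positivity)]
  -- `2q³ - (q - 2) = 2q (q - 1/2)² + 2 (q - 3/8)² + 55/32`
  nlinarith [mul_nonneg hq.le (sq_nonneg (q - 1 / 2)), sq_nonneg (q - 3 / 8)]

lemma contraction_factor_le {q x : ℝ} (hq : 1 ≤ q) (hx : x ≤ 1) :
    1 - (q - 1) / (2 * q ^ 3) * exp (-(1 / q) * x) ≤ 1 - (q - 2) / (2 * q ^ 3) := by
  have hq₀ : 0 < q := by linarith
  have hexp : 1 - 1 / q ≤ exp (-(1 / q) * x) := one_sub_le_exp_neg_mul (by positivity) hx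
  have hrate : (q - 2) / (2 * q ^ 3) ≤ (q - 1) / (2 * q ^ 3) * (1 - 1 / q) := by
    have hsq : (q - 1) * (1 - 1 / q) = (q - 1) ^ 2 / q := by field_simp
    rw [div_mul_eq_mul_div, div_le_div_iff_of_pos_right (by positivity), hsq, le_div_iff₀ hq₀]
    nlinarith
  have hc : 0 ≤ (q - 1) / (2 * q ^ 3) := div_nonneg (by linarith) (by positivity)
  linarith [mul_le_mul_of_nonneg_left hexp hc]

theorem stmt_5 (q : ℝ) (hq : 2 < q) (ρ : ℝ) (hρ : ρ = 1 - (q - 2) / (2 * q ^ 3))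
    (d s : ℕ → ℝ) (t₁ : ℕ)
    (hdpos : ∀ t, 0 < d t) (hspos : ∀ t, 0 < s t)
    (hrec : ∀ t, t₁ ≤ t →
      d (t + 1) / s (t + 1) =
        (d t / s t) * (1 - (q - 1) / (2 * q ^ 3) * Real.exp (-(1 / q) * (d t / s t))))
    (hinit : d t₁ / s t₁ < 1 / q ^ 2)
    (hratio : ∀ t, t₁ ≤ t → d t / s t < 1) :
    ∀ t : ℕ, d (t₁ + t) / s (t₁ + t) < 1 / q ^ 2 * ρ ^ t := by
  subst hρ
  refine lt_mul_pow_of_le_mul (u := fun t ↦ d (t₁ + t) / s (t₁ + t))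
    (one_sub_div_two_mul_cube_pos (by linarith)) (by simpa using hinit) fun t ↦ ?_
  have ht : t₁ ≤ t₁ + t := Nat.le_add_right t₁ t
  have hx : 0 ≤ d (t₁ + t) / s (t₁ + t) := (div_pos (hdpos _) (hspos _)).le
  rw [← add_assoc, hrec _ ht, mul_comm]
  exact mul_le_mul_of_nonneg_right (contraction_factor_le (by linarith) (hratio _ ht).le) hx
end

section
/- Let q > 2 and ρ = 1 - (q-2)/(2q³). Suppose (s_t) is a positive sequence satisfying s_{t+1} = s_t e^{-(1/q)(d_t/s_t)} where 0 < d_t/s_t < (1/q²)ρ^{t - t₁} for all t ≥ t₁. Then for all t ≥ 0, s_{t₁+t} ≥ s_{t₁}(1 - 4/(q-2)). -/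
/-! Unrolling the recursion gives `s (t₁ + t) = s t₁ * exp (-y)` with `y = (1/q) ∑ d/s`. The ratios
are dominated by a geometric series of ratio `ρ`, whose sum is at most `1 / (1 - ρ) = 2q³/(q - 2)`,
so `y ≤ 2/(q - 2)`, and `exp (-y) ≥ 1 - y` finishes. -/

open Finset Real

lemma eq_mul_exp_neg_sum_of_succ {s a : ℕ → ℝ} (h : ∀ n, s (n + 1) = s n * exp (-a n)) (n : ℕ) :
    s n = s 0 * exp (-∑ i ∈ range n, a i) := by
  induction n with
  | zero => simp
  | succ n ih => rw [h, ih, sum_range_succ, mul_assoc, ← exp_add, neg_add]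

lemma sum_le_div_one_sub_of_le_geom {x : ℕ → ℝ} {c ρ : ℝ} (hρ₀ : 0 ≤ ρ) (hρ₁ : ρ < 1) (hc : 0 ≤ c)
    (hx : ∀ i, x i ≤ c * ρ ^ i) (n : ℕ) :
    ∑ i ∈ range n, x i ≤ c / (1 - ρ) :=
  calc ∑ i ∈ range n, x i ≤ c * ∑ i ∈ range n, ρ ^ i := by
        rw [mul_sum]; exact sum_le_sum fun i _ ↦ hx i
    _ ≤ c * (ρ ^ 0 / (1 - ρ)) := by
        gcongr; rw [range_eq_Ico]; exact geom_sum_Ico_le_of_lt_one hρ₀ hρ₁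
    _ = c / (1 - ρ) := by rw [pow_zero, mul_one_div]

section

variable {q : ℝ} (hq : 2 < q)
include hq

lemma one_sub_div_two_mul_pow_three_nonneg : 0 ≤ 1 - (q - 2) / (2 * q ^ 3) := by
  have hq₀ : 0 < q := by linarith
  rw [sub_nonneg, div_le_one (by positivity)]
  nlinarith [mul_pos (mul_pos hq₀ (by linarith : (0 : ℝ) < q - 1)) (by linarith : (0 : ℝ) < q + 1)]

lemma one_sub_div_two_mul_pow_three_lt_one : 1 - (q - 2) / (2 * q ^ 3) < 1 := by
  have : 0 < (q - 2) / (2 * q ^ 3) := div_pos (by linarith) (by positivity)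
  linarith

lemma inv_mul_inv_sq_div_div_two_mul_pow_three :
    1 / q * (1 / q ^ 2) / (1 - (1 - (q - 2) / (2 * q ^ 3))) = 2 / (q - 2) := by
  have : q - 2 ≠ 0 := by linarith
  have : q ≠ 0 := by linarith
  rw [sub_sub_cancel]
  field_simp

end

theorem stmt_6 (q : ℝ) (hq : 2 < q) (ρ : ℝ) (hρ : ρ = 1 - (q - 2) / (2 * q ^ 3))
    (d s : ℕ → ℝ) (t₁ : ℕ)
    (hspos : ∀ t, 0 < s t)
    (hrec : ∀ t, t₁ ≤ t → s (t + 1) = s t * Real.exp (-(1 / q) * (d t / s t)))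
    (hratio : ∀ t, t₁ ≤ t → 0 < d t / s t ∧ d t / s t < 1 / q ^ 2 * ρ ^ (t - t₁)) :
    ∀ t : ℕ, s (t₁ + t) ≥ s t₁ * (1 - 4 / (q - 2)) := by
  intro t
  have hq₀ : 0 < q := by linarith
  set a : ℕ → ℝ := fun i ↦ 1 / q * (d (t₁ + i) / s (t₁ + i)) with ha
  have hunroll : s (t₁ + t) = s t₁ * exp (-∑ i ∈ range t, a i) :=
    eq_mul_exp_neg_sum_of_succ (s := fun n ↦ s (t₁ + n))
      (fun n ↦ by
        rw [← add_assoc]; simpa [ha, neg_mul] using hrec (t₁ + n) (Nat.le_add_right _ _)) t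
  have hρ₀ : 0 ≤ ρ := hρ ▸ one_sub_div_two_mul_pow_three_nonneg hq
  have hρ₁ : ρ < 1 := hρ ▸ one_sub_div_two_mul_pow_three_lt_one hq
  have hsum : ∑ i ∈ range t, a i ≤ 2 / (q - 2) := by
    rw [← inv_mul_inv_sq_div_div_two_mul_pow_three hq, ← hρ]
    refine sum_le_div_one_sub_of_le_geom hρ₀ hρ₁ (by positivity) (fun i ↦ ?_) t
    have hratio_i := (hratio (t₁ + i) (Nat.le_add_right _ _)).2
    rw [Nat.add_sub_cancel_left] at hratio_i
    rw [mul_assoc (1 / q)]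
    exact mul_le_mul_of_nonneg_left hratio_i.le (by positivity)
  have h24 : 2 / (q - 2) ≤ 4 / (q - 2) := by gcongr; norm_num
  have hs₁ := (hspos t₁).le
  calc s t₁ * (1 - 4 / (q - 2)) ≤ s t₁ * (-∑ i ∈ range t, a i + 1) := by gcongr; linarith
    _ ≤ s t₁ * exp (-∑ i ∈ range t, a i) := by gcongr; exact add_one_le_exp _
    _ = s (t₁ + t) := hunroll.symm
end

section
/- Let q > 2, ρ = 1 - (q-2)/(2q³), μ = 1 - 1/(2q²). Suppose (d_t), (s_t) are positive sequences with d_{t+1} = d_t(1 - ((q-1)/(2q³))e^{-(1/q)(d_t/s_t)})e^{-(1/q)(d_t/s_t)} and s_{t+1} = s_t e^{-(1/q)(d_t/s_t)} for t ≥ t₁, and 0 < d_t/s_t < (1/q²)ρ^{t-t₁} for all t ≥ t₁. Then d_{t₁+t} ≥ d_{t₁}(1 - 4/(q-2))μ^t for all t ≥ 0. -/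
/-!
Write `r_t = d_t / s_t` and `E_t = exp (-(r_t / q))`. Since `E_t ≤ 1`, the factor
`1 - (q-1)/(2q³) E_t` is at least `μ`, so `d_{t+1} ≥ μ d_t E_t` while `s_{t+1} = s_t E_t`; hence
`r_{t+1} ≥ μ r_t` and `d_{t₁+t} ≥ μ^t d_{t₁} · s_{t₁+t} / s_{t₁}`. On the other hand
`s_{t₁+t} / s_{t₁} = exp (-(1/q) Σ r_j) ≥ 1 - (1/q) Σ r_j`, and the geometric bound on `r_j`
gives `(1/q) Σ r_j ≤ (1/q³) / (1 - ρ) = 2 / (q - 2)`.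
-/

open Real Finset

lemma sum_le_div_one_sub_of_le_mul_pow {r : ℕ → ℝ} {C ρ : ℝ} (hC : 0 ≤ C) (hρ₀ : 0 ≤ ρ)
    (hρ₁ : ρ < 1) (hr : ∀ n, r n ≤ C * ρ ^ n) (n : ℕ) :
    ∑ j ∈ range n, r j ≤ C / (1 - ρ) :=
  calc ∑ j ∈ range n, r j ≤ ∑ j ∈ range n, C * ρ ^ j := sum_le_sum fun j _ ↦ hr j
    _ = C * ∑ j ∈ Ico 0 n, ρ ^ j := by rw [← mul_sum, range_eq_Ico]
    _ ≤ C * (ρ ^ 0 / (1 - ρ)) := by gcongr; exact geom_sum_Ico_le_of_lt_one hρ₀ hρ₁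
    _ = C / (1 - ρ) := by rw [pow_zero, mul_one_div]

lemma eq_mul_exp_sum_of_succ_eq_mul_exp {s x : ℕ → ℝ} (hs : ∀ n, s (n + 1) = s n * exp (x n))
    (n : ℕ) : s n = s 0 * exp (∑ j ∈ range n, x j) := by
  induction n with
  | zero => simp
  | succ n ih => rw [hs, ih, sum_range_succ, exp_add, mul_assoc]

lemma one_sub_mul_sum_le_div_of_succ_eq_mul_exp {s r : ℕ → ℝ} {a : ℝ} (hs₀ : 0 < s 0)
    (hs : ∀ n, s (n + 1) = s n * exp (-a * r n)) (n : ℕ) :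
    1 - a * ∑ j ∈ range n, r j ≤ s n / s 0 := by
  rw [eq_mul_exp_sum_of_succ_eq_mul_exp hs n, mul_div_cancel_left₀ _ hs₀.ne', ← mul_sum]
  linarith [add_one_le_exp (-a * ∑ j ∈ range n, r j)]

lemma pow_mul_mul_div_le_of_mul_le_succ {d s E : ℕ → ℝ} {μ : ℝ} (hμ : 0 ≤ μ)
    (hs : ∀ n, 0 < s n) (hd : ∀ n, μ * d n * E n ≤ d (n + 1))
    (hsE : ∀ n, s (n + 1) = s n * E n) (n : ℕ) :
    μ ^ n * d 0 * (s n / s 0) ≤ d n := by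
  have hratio : ∀ k, μ * (d k / s k) ≤ d (k + 1) / s (k + 1) := by
    intro k
    have hE : 0 < E k := pos_of_mul_pos_right (hsE k ▸ hs (k + 1)) (hs k).le
    rw [hsE, le_div_iff₀ (mul_pos (hs k) hE)]
    calc μ * (d k / s k) * (s k * E k) = μ * d k * E k := by field_simp [(hs k).ne']
      _ ≤ d (k + 1) := hd k
  have := geom_le hμ n fun k _ ↦ hratio k
  rw [le_div_iff₀ (hs n)] at this
  calc μ ^ n * d 0 * (s n / s 0) = μ ^ n * (d 0 / s 0) * s n := by ring
    _ ≤ d n := this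

lemma sub_one_div_two_mul_pow_three_mul_le {q E : ℝ} (hq : 1 ≤ q) (hE : E ≤ 1) :
    (q - 1) / (2 * q ^ 3) * E ≤ 1 / (2 * q ^ 2) :=
  calc (q - 1) / (2 * q ^ 3) * E ≤ (q - 1) / (2 * q ^ 3) :=
        mul_le_of_le_one_right (div_nonneg (by linarith) (by positivity)) hE
    _ ≤ 1 / (2 * q ^ 2) := by
        rw [div_le_div_iff₀ (by positivity) (by positivity)]
        nlinarith

lemma inv_mul_sum_le_two_div_sub_two {q : ℝ} (hq : 2 < q) {r : ℕ → ℝ}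
    (hr : ∀ n, r n ≤ 1 / q ^ 2 * (1 - (q - 2) / (2 * q ^ 3)) ^ n) (n : ℕ) :
    1 / q * ∑ j ∈ range n, r j ≤ 2 / (q - 2) := by
  have hq₀ : 0 < q := by linarith
  have hδ : 0 < (q - 2) / (2 * q ^ 3) := div_pos (by linarith) (by positivity)
  have hδ₁ : (q - 2) / (2 * q ^ 3) ≤ 1 := by
    rw [div_le_one (by positivity)]
    linarith [le_self_pow₀ (by linarith : 1 ≤ q) (by norm_num : 3 ≠ 0)]
  calc 1 / q * ∑ j ∈ range n, r j
      ≤ 1 / q * (1 / q ^ 2 / (1 - (1 - (q - 2) / (2 * q ^ 3)))) := by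
        gcongr
        exact sum_le_div_one_sub_of_le_mul_pow (by positivity) (by linarith) (by linarith) hr n
    _ = 2 / (q - 2) := by
        have : q - 2 ≠ 0 := by linarith
        rw [sub_sub_cancel]
        field_simp

theorem stmt_7 (q : ℝ) (hq : 2 < q) (ρ μ : ℝ)
    (hρ : ρ = 1 - (q - 2) / (2 * q ^ 3)) (hμ : μ = 1 - 1 / (2 * q ^ 2))
    (d s : ℕ → ℝ) (t₁ : ℕ)
    (hdpos : ∀ t, 0 < d t) (hspos : ∀ t, 0 < s t)
    (hdrec : ∀ t, t₁ ≤ t →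
      d (t + 1) = d t * (1 - (q - 1) / (2 * q ^ 3) * Real.exp (-(1 / q) * (d t / s t)))
        * Real.exp (-(1 / q) * (d t / s t)))
    (hsrec : ∀ t, t₁ ≤ t → s (t + 1) = s t * Real.exp (-(1 / q) * (d t / s t)))
    (hratio : ∀ t, t₁ ≤ t → 0 < d t / s t ∧ d t / s t < 1 / q ^ 2 * ρ ^ (t - t₁)) :
    ∀ t : ℕ, d (t₁ + t) ≥ d t₁ * (1 - 4 / (q - 2)) * μ ^ t := by
  intro t
  set r : ℕ → ℝ := fun n ↦ d (t₁ + n) / s (t₁ + n)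
  set E : ℕ → ℝ := fun n ↦ exp (-(1 / q) * r n)
  have hE₁ (n : ℕ) : E n ≤ 1 :=
    exp_le_one_iff.2 <| mul_nonpos_of_nonpos_of_nonneg (neg_nonpos.2 (by positivity))
      (hratio _ le_self_add).1.le
  have hμ₀ : 0 ≤ μ := by
    rw [hμ, sub_nonneg, div_le_one (by positivity)]
    nlinarith
  have hd (n : ℕ) : μ * d (t₁ + n) * E n ≤ d (t₁ + (n + 1)) := by
    have := (hdpos (t₁ + n)).le
    rw [← add_assoc, hdrec _ le_self_add, mul_comm μ, hμ]
    gcongr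
    exact sub_one_div_two_mul_pow_three_mul_le (by linarith) (hE₁ n)
  have hsum : 1 / q * ∑ j ∈ range t, r j ≤ 2 / (q - 2) :=
    inv_mul_sum_le_two_div_sub_two hq
      (fun n ↦ by simpa [hρ] using (hratio (t₁ + n) le_self_add).2.le) t
  have hshrink : 1 - 4 / (q - 2) ≤ s (t₁ + t) / s (t₁ + 0) := by
    have h := one_sub_mul_sum_le_div_of_succ_eq_mul_exp (s := fun n ↦ s (t₁ + n)) (r := r)
      (a := 1 / q) (hspos _) (fun n ↦ hsrec _ le_self_add) t
    have : 2 / (q - 2) ≤ 4 / (q - 2) := by gcongr; linarith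
    linarith
  have hgrowth := pow_mul_mul_div_le_of_mul_le_succ (d := fun n ↦ d (t₁ + n))
    (s := fun n ↦ s (t₁ + n)) hμ₀ (fun _ ↦ hspos _) hd (fun n ↦ hsrec _ le_self_add) t
  calc d t₁ * (1 - 4 / (q - 2)) * μ ^ t = μ ^ t * d t₁ * (1 - 4 / (q - 2)) := by ring
    _ ≤ μ ^ t * d t₁ * (s (t₁ + t) / s (t₁ + 0)) := by
        gcongr
        exact mul_nonneg (pow_nonneg hμ₀ t) (hdpos _).le
    _ ≤ d (t₁ + t) := hgrowth
end

section
/- Let q > 1, α ∈ [0, 1/q], and s, d, e > 0 with e < 1. Suppose a finite multiset M of positive reals has size m ≥ s(1+e') and average μ̄ ≤ ((1-qα)/(1-α))·γ·d for some γ ≥ 1 and e' with |e'| ≤ e. First add ⌈(α/(1-α))m⌉ elements of value qγd to M, then remove from the enlarged multiset all elements of value ≥ qγd. Then the resulting multiset M' has size ≥ (1-α')·s(1+e') for some α' ∈ [0,1/q] and average ≤ ((1-qα')/(1-α'))·γ·d. -/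
/-!
The added copies of `q γ d` are all discarded again, so `M'` consists of the elements of `M`
below `q γ d`. Say `k` of the `m` elements of `M` are at least `q γ d`, and take `α' = k / m`.
Since `α ≤ 1 / q`, the average of `M` is at most `γ d`. The `k` large elements alone
contribute at least `k q γ d` to a total of at most `m γ d`, which forces `q k ≤ m`, i.e.
`α' ≤ 1 / q`, and leaves at most `(m - q k) γ d = (1 - q α') / (1 - α') · γ d · (m - k)`
for the `m - k` survivors.
-/

open Multiset

theorem Multiset.filter_add_replicate_of_not {α : Type*} (p : α → Prop) [DecidablePred p]
    {c : α} (hc : ¬ p c) (M : Multiset α) (n : ℕ) :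
    filter p (M + replicate n c) = filter p M := by
  have hnone : filter p (replicate n c) = 0 :=
    filter_eq_nil.mpr fun _ hx => eq_of_mem_replicate hx ▸ hc
  rw [filter_add, hnone, add_zero]

theorem Multiset.sum_filter_lt_add_card_filter_not_lt_mul_le_sum (M : Multiset ℝ) (c : ℝ) :
    (M.filter (· < c)).sum + (M.filter (¬ · < c)).card * c ≤ M.sum := by
  have hlarge : ((M.filter (¬ · < c)).card : ℝ) * c ≤ (M.filter (¬ · < c)).sum := by
    simpa only [nsmul_eq_mul] using
      card_nsmul_le_sum (a := c) fun x hx => not_lt.mp (mem_filter.mp hx).2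
  have hsplit := congrArg sum (filter_add_not (· < c) M)
  rw [sum_add] at hsplit
  linarith

theorem one_sub_mul_div_one_sub_le_one {q α : ℝ} (hq : 1 < q) (hα : α ∈ Set.Icc 0 (1 / q)) :
    (1 - q * α) / (1 - α) ≤ 1 := by
  have hqα : q * α ≤ 1 := by
    have := mul_le_mul_of_nonneg_left hα.2 (by linarith : 0 ≤ q)
    rwa [mul_one_div_cancel (by linarith)] at this
  rw [div_le_one (by nlinarith [hα.1])]
  nlinarith [hα.1]

theorem Multiset.exists_card_filter_lt_eq_and_avg_le {q T : ℝ} (hq : 1 < q) (hT : 0 < T)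
    (M : Multiset ℝ) (hnonneg : ∀ x ∈ M, 0 ≤ x) (hm : 0 < M.card)
    (hsum : M.sum ≤ M.card * T) :
    ∃ α' ∈ Set.Icc 0 (1 / q),
      ((M.filter (· < q * T)).card : ℝ) = (1 - α') * M.card ∧
      (M.filter (· < q * T)).sum / (M.filter (· < q * T)).card ≤
        (1 - q * α') / (1 - α') * T := by
  set m : ℝ := (M.card : ℝ)
  set k : ℝ := ((M.filter (¬ · < q * T)).card : ℝ)
  have hm : 0 < m := Nat.cast_pos.mpr hm
  have hk : 0 ≤ k := Nat.cast_nonneg _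
  have hcard : ((M.filter (· < q * T)).card : ℝ) = m - k := by
    rw [eq_sub_iff_add_eq, ← Nat.cast_add, ← card_add, filter_add_not]
  have hbound := M.sum_filter_lt_add_card_filter_not_lt_mul_le_sum (q * T)
  have hsmall : 0 ≤ (M.filter (· < q * T)).sum :=
    sum_nonneg fun x hx => hnonneg x (mem_of_mem_filter hx)
  have hqk : q * k ≤ m := le_of_mul_le_mul_right (by nlinarith) hT
  have hkm : k < m := by nlinarith
  refine ⟨k / m, ⟨by positivity, ?_⟩, ?_, ?_⟩
  · rw [div_le_div_iff₀ hm (by linarith)]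
    linarith
  · rw [hcard]
    field_simp
  · rw [hcard, div_le_iff₀ (by linarith)]
    have hfactor : (1 - q * (k / m)) / (1 - k / m) * T * (m - k) = (m - q * k) * T := by
      field_simp
      rw [mul_div_cancel_right₀ _ (by linarith)]
    rw [hfactor]
    nlinarith

theorem stmt_13_general (q α s d e e' γ : ℝ)
    (hq : 1 < q) (hα : α ∈ Set.Icc 0 (1 / q))
    (hs : 0 < s) (hd : 0 < d) (he1 : e < 1)
    (hγ : 1 ≤ γ) (he' : |e'| ≤ e)
    (M : Multiset ℝ) (hpos : ∀ x ∈ M, 0 < x)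
    (hcard : (M.card : ℝ) ≥ s * (1 + e'))
    (havg : M.sum / M.card ≤ (1 - q * α) / (1 - α) * γ * d) :
    ∃ α' ∈ Set.Icc 0 (1 / q),
      ((Multiset.filter (fun x => x < q * γ * d)
          (M + Multiset.replicate ⌈α / (1 - α) * M.card⌉₊ (q * γ * d))).card : ℝ)
        ≥ (1 - α') * s * (1 + e') ∧
      (Multiset.filter (fun x => x < q * γ * d)
          (M + Multiset.replicate ⌈α / (1 - α) * M.card⌉₊ (q * γ * d))).sum /
        (Multiset.filter (fun x => x < q * γ * d)
          (M + Multiset.replicate ⌈α / (1 - α) * M.card⌉₊ (q * γ * d))).card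
        ≤ (1 - q * α') / (1 - α') * γ * d := by
  rw [filter_add_replicate_of_not (· < q * γ * d) (lt_irrefl _), mul_assoc q γ d]
  have hγd : 0 < γ * d := by positivity
  have hm : (0 : ℝ) < M.card := by
    have : -1 < e' := by linarith [neg_abs_le e']
    exact lt_of_lt_of_le (by nlinarith) hcard
  have hsum : M.sum ≤ M.card * (γ * d) := calc
    M.sum ≤ M.card * ((1 - q * α) / (1 - α) * γ * d) := by rwa [div_le_iff₀' hm] at havg
    _ ≤ M.card * (γ * d) := by
      rw [mul_assoc _ γ]
      exact mul_le_mul_of_nonneg_left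
        (mul_le_of_le_one_left hγd.le (one_sub_mul_div_one_sub_le_one hq hα)) hm.le
  obtain ⟨α', hα', hcard', havg'⟩ := M.exists_card_filter_lt_eq_and_avg_le hq hγd
    (fun x hx => (hpos x hx).le) (Nat.cast_pos.mp hm) hsum
  refine ⟨α', hα', ?_, ?_⟩
  · rw [hcard', mul_assoc]
    have hα'1 : α' < 1 := hα'.2.trans_lt ((div_lt_one (by linarith)).mpr hq)
    exact mul_le_mul_of_nonneg_left hcard (by linarith)
  · rwa [mul_assoc _ γ]

theorem stmt_13 (q α s d e e' γ : ℝ)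
    (hq : 1 < q) (hα : α ∈ Set.Icc 0 (1 / q))
    (hs : 0 < s) (hd : 0 < d) (he : 0 < e) (he1 : e < 1)
    (hγ : 1 ≤ γ) (he' : |e'| ≤ e)
    (M : Multiset ℝ) (hpos : ∀ x ∈ M, 0 < x)
    (hcard : (M.card : ℝ) ≥ s * (1 + e'))
    (havg : M.sum / M.card ≤ (1 - q * α) / (1 - α) * γ * d) :
    ∃ α' ∈ Set.Icc 0 (1 / q),
      ((Multiset.filter (fun x => x < q * γ * d)
          (M + Multiset.replicate ⌈α / (1 - α) * M.card⌉₊ (q * γ * d))).card : ℝ)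
        ≥ (1 - α') * s * (1 + e') ∧
      (Multiset.filter (fun x => x < q * γ * d)
          (M + Multiset.replicate ⌈α / (1 - α) * M.card⌉₊ (q * γ * d))).sum /
        (Multiset.filter (fun x => x < q * γ * d)
          (M + Multiset.replicate ⌈α / (1 - α) * M.card⌉₊ (q * γ * d))).card
        ≤ (1 - q * α') / (1 - α') * γ * d :=
  stmt_13_general q α s d e e' γ hq hα hs hd he1 hγ he' M hpos hcard havg
end

section
/- Let q > 6. Define μ = 1 - 1/(2q²) and ρ = 1 - (q-2)/(2q³). For every δ > 0 there exists c_δ > 0 such that: if Δ is sufficiently large, k ≤ c_δ log Δ, s_{t₁} = (Δ/k)e^{-Ck} for a constant C > 0, η_{t₁} ≤ Δ, s_{t₁+t} ≥ s_{t₁}(1 - 4/(q-2)) for all t, and η_{t₁+t} < Δρ^t, then there exists t ≤ δ log Δ with η_{t₁+t} < ((q-1)/q)·s_{t₁+t}. -/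
/-!
Write `L = -log ρ > 0` and `T = ⌊δ log Δ⌋₊`, so that `Δ ρ^T ≤ Δ e^{-T L}`. Since `log k ≤ k`, the
requirement `Δ ρ^T ≤ B s_{t₁} = B (Δ/k) e^{-Ck}` reduces to `(C + 1) k - log B ≤ T L`. As
`T L ≥ δ L log Δ - L`, a quarter of `δ L log Δ` absorbs `(C + 1) k` once `k ≤ c_δ log Δ` with
`c_δ = δ L / (4 (C + 1))`, and the remaining three quarters absorb `L - log B` for large `Δ`.
-/

open Real

theorem exists_forall_mul_add_log_add_le_floor_mul {L δ : ℝ} (hL : 0 < L) (hδ : 0 < δ)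
    (C b : ℝ) :
    ∃ c > (0 : ℝ), ∃ x₀ : ℝ, ∀ x ≥ x₀, ∀ k : ℝ, 0 < k → k ≤ c * x →
      C * k + log k + b ≤ ⌊δ * x⌋₊ * L := by
  have hC : 0 < |C| + 1 := by positivity
  refine ⟨δ * L / (4 * (|C| + 1)), by positivity, (L + b) / (3 * δ * L / 4), ?_⟩
  intro x hx k hk hkx
  have hlog : log k ≤ k := (log_le_sub_one_of_pos hk).trans (by linarith)
  have hCk : C * k ≤ |C| * k := mul_le_mul_of_nonneg_right (le_abs_self C) hk.le
  have hk' : (|C| + 1) * k ≤ δ * L / 4 * x := by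
    calc (|C| + 1) * k ≤ (|C| + 1) * (δ * L / (4 * (|C| + 1)) * x) := by gcongr
      _ = δ * L / 4 * x := by field_simp
  have hx' : L + b ≤ 3 * δ * L / 4 * x := by
    rwa [ge_iff_le, div_le_iff₀' (by positivity)] at hx
  have hT : (δ * x - 1) * L ≤ ⌊δ * x⌋₊ * L := by
    gcongr
    linarith [Nat.lt_floor_add_one (δ * x)]
  nlinarith

theorem pow_le_exp_neg_of_le_mul_neg_log {ρ y : ℝ} (hρ : 0 < ρ) {n : ℕ}
    (h : y ≤ n * -log ρ) : ρ ^ n ≤ exp (-y) := by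
  calc ρ ^ n = exp (n * log ρ) := by rw [exp_nat_mul, exp_log hρ]
    _ ≤ exp (-y) := exp_le_exp.mpr (by linarith)

theorem exists_pow_floor_le_mul_exp_div {ρ δ B : ℝ} (hρ₀ : 0 < ρ) (hρ₁ : ρ < 1) (hδ : 0 < δ)
    (hB : 0 < B) (C : ℝ) :
    ∃ c > (0 : ℝ), ∃ x₀ : ℝ, ∀ x ≥ x₀, ∀ k : ℝ, 0 < k → k ≤ c * x →
      ρ ^ ⌊δ * x⌋₊ ≤ B * exp (-C * k) / k := by
  obtain ⟨c, hc, x₀, h⟩ := exists_forall_mul_add_log_add_le_floor_mul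
    (neg_pos.mpr (log_neg hρ₀ hρ₁)) hδ C (-log B)
  refine ⟨c, hc, x₀, fun x hx k hk hkx => ?_⟩
  calc ρ ^ ⌊δ * x⌋₊ ≤ exp (-(C * k + log k + -log B)) :=
        pow_le_exp_neg_of_le_mul_neg_log hρ₀ (h x hx k hk hkx)
    _ = B * exp (-C * k) / k := by
        rw [show -(C * k + log k + -log B) = log B + -C * k - log k by ring, exp_sub, exp_add,
          exp_log hB, exp_log hk]

theorem stmt_16 (q : ℝ) (hq : 6 < q) (ρ : ℝ) (hρ : ρ = 1 - (q - 2) / (2 * q ^ 3)) :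
    ∀ δ > (0 : ℝ), ∀ C > (0 : ℝ), ∃ cδ > (0 : ℝ), ∃ Δ₀ : ℝ, ∀ Δ : ℝ, Δ₀ ≤ Δ →
      ∀ k : ℝ, 0 < k → k ≤ cδ * Real.log Δ →
      ∀ (s η : ℕ → ℝ) (t₁ : ℕ),
        s t₁ = Δ / k * Real.exp (-C * k) →
        η t₁ ≤ Δ →
        (∀ t : ℕ, s (t₁ + t) ≥ s t₁ * (1 - 4 / (q - 2))) →
        (∀ t : ℕ, η (t₁ + t) < Δ * ρ ^ t) →
        ∃ t : ℕ, (t : ℝ) ≤ δ * Real.log Δ ∧ η (t₁ + t) < (q - 1) / q * s (t₁ + t) := by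
  intro δ hδ C _
  have hq3 : q < q ^ 3 := lt_self_pow₀ (by linarith) (by norm_num)
  have hρ₀ : 0 < ρ := by
    rw [hρ, sub_pos, div_lt_one (by linarith)]
    linarith
  have hρ₁ : ρ < 1 := by
    rw [hρ, sub_lt_self_iff]
    exact div_pos (by linarith) (by linarith)
  have hB : 0 < (q - 1) / q * (1 - 4 / (q - 2)) := by
    have : 4 / (q - 2) < 1 := by rw [div_lt_one (by linarith)]; linarith
    apply mul_pos (div_pos (by linarith) (by linarith))
    linarith
  obtain ⟨c, hc, x₀, hpow⟩ := exists_pow_floor_le_mul_exp_div hρ₀ hρ₁ hδ hB C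
  refine ⟨c, hc, exp x₀, fun Δ hΔ k hk hkc s η t₁ hs _ hs_lower hη => ?_⟩
  have hΔ₀ : 0 < Δ := (exp_pos x₀).trans_le hΔ
  have hlogΔ : 0 < log Δ := pos_of_mul_pos_right (hk.trans_le hkc) hc.le
  set T := ⌊δ * log Δ⌋₊
  refine ⟨T, Nat.floor_le (by positivity), ?_⟩
  calc η (t₁ + T) < Δ * ρ ^ T := hη T
    _ ≤ Δ * ((q - 1) / q * (1 - 4 / (q - 2)) * exp (-C * k) / k) := by
        gcongr
        exact hpow _ ((le_log_iff_exp_le hΔ₀).mpr hΔ) k hk hkc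
    _ = (q - 1) / q * (s t₁ * (1 - 4 / (q - 2))) := by rw [hs]; ring
    _ ≤ (q - 1) / q * s (t₁ + T) := by
        gcongr
        · exact div_nonneg (by linarith) (by linarith)
        · exact hs_lower T
end
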